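/- arXiv:1502.07420 — 5 statements merged into one kernel-verified Lean document; each statement's English description precedes it below -/
import Mathlib

section
/- The pullback of the round metric on S^3 under the map Φ(x,y,z) = (e^{i√2 x} sin(z+π/4), e^{i√2 y} cos(z+π/4)) equals the Euclidean metric plus (sin 2z)(dx² − dy²); equivalently, for all (x,y,z), the matrix of Φ*g_S in coordinates (x,y,z) is diag(1+sin 2z, 1−sin 2z, 1). -/
open Real

/-- The map `Φ(x,y,z) = (e^{i√2 x} sin(z+π/4), e^{i√2 y} cos(z+π/4))` into `ℂ²`. -/
noncomputable def PhiMap : ℝ × ℝ × ℝ → ℂ × ℂ := fun p =>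
  (Complex.exp (Complex.I * (Real.sqrt 2 * p.1)) * (Real.sin (p.2.2 + π / 4) : ℂ),
   Complex.exp (Complex.I * (Real.sqrt 2 * p.2.1)) * (Real.cos (p.2.2 + π / 4) : ℂ))

/-- The real (round) inner product on `ℂ² ≅ ℝ⁴`. -/
noncomputable def realInnerC2 (a b : ℂ × ℂ) : ℝ :=
  ((starRingEnd ℂ) a.1 * b.1).re + ((starRingEnd ℂ) a.2 * b.2).re

/-!
Both components of `Φ` are in polar form `e^{iθ} r` with real `θ` and `r`, and the flat metric
of `ℂ` pulls back along such a map to `r² dθ² + dr²`. With `θ = √2 x, √2 y` and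
`r = sin (z + π/4), cos (z + π/4)` the two contributions add up to
`2 sin² (z + π/4) dx² + 2 cos² (z + π/4) dy² + dz²`, and `2 sin² (z + π/4) = 1 + sin 2z`.
-/

open Complex (I ofRealCLM)

section Polar

variable {E : Type*} [NormedAddCommGroup E] [NormedSpace ℝ E]

theorem HasFDerivAt.cexp_I_mul_mul_ofReal {θ r : E → ℝ} {θ' r' : E →L[ℝ] ℝ} {x : E}
    (hθ : HasFDerivAt θ θ' x) (hr : HasFDerivAt r r' x) :
    HasFDerivAt (fun p => Complex.exp (I * θ p) * r p)
      (Complex.exp (I * θ x) • (I • ofRealCLM ∘L (r x • θ') + ofRealCLM ∘L r')) x := by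
  have hθc : HasFDerivAt (fun p => (θ p : ℂ)) (ofRealCLM ∘L θ') x :=
    ofRealCLM.hasFDerivAt.comp x hθ
  have hrc : HasFDerivAt (fun p => (r p : ℂ)) (ofRealCLM ∘L r') x :=
    ofRealCLM.hasFDerivAt.comp x hr
  refine ((hθc.const_mul I).cexp.mul hrc).congr_fderiv ?_
  ext v
  simp
  ring

theorem re_conj_exp_I_mul_mul (t a b c d : ℝ) :
    (starRingEnd ℂ (Complex.exp (I * t) * (I * a + b)) * (Complex.exp (I * t) * (I * c + d))).re
      = a * c + b * d := by
  have hunit : starRingEnd ℂ (Complex.exp (I * t)) * Complex.exp (I * t) = 1 := by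
    rw [Complex.conj_mul', mul_comm, Complex.norm_exp_ofReal_mul_I]
    simp
  calc _ = (starRingEnd ℂ (Complex.exp (I * t)) * Complex.exp (I * t) *
          (starRingEnd ℂ (I * a + b) * (I * c + d))).re := by
        rw [map_mul]; congr 1; ring
    _ = a * c + b * d := by
        rw [hunit, one_mul]; simp [Complex.mul_re]; ring

theorem re_conj_polarFDeriv_mul (t ρ : ℝ) (θ' r' : E →L[ℝ] ℝ) (v w : E) :
    (starRingEnd ℂ ((Complex.exp (I * t) • (I • ofRealCLM ∘L (ρ • θ') + ofRealCLM ∘L r')) v) *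
        (Complex.exp (I * t) • (I • ofRealCLM ∘L (ρ • θ') + ofRealCLM ∘L r')) w).re
      = ρ ^ 2 * (θ' v * θ' w) + r' v * r' w := by
  simp only [smul_apply, add_apply, ContinuousLinearMap.comp_apply, Complex.ofRealCLM_apply,
    smul_eq_mul, re_conj_exp_I_mul_mul]
  ring

end Polar

theorem sin_add_pi_div_four_sq (z : ℝ) : sin (z + π / 4) ^ 2 = (1 + sin (2 * z)) / 2 := by
  have h : 2 * (z + π / 4) = 2 * z + π / 2 := by ring
  rw [sin_sq_eq_half_sub, h, cos_add_pi_div_two]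
  ring

theorem cos_add_pi_div_four_sq (z : ℝ) : cos (z + π / 4) ^ 2 = (1 - sin (2 * z)) / 2 := by
  rw [cos_sq', sin_add_pi_div_four_sq]
  ring

/-- The pullback of the round metric under `Φ` is
`dx² + dy² + dz² + (sin 2z)(dx² − dy²)`: its matrix in `(x,y,z)` coordinates is
`diag(1 + sin 2z, 1 − sin 2z, 1)`. -/
theorem pullback_round_metric (x y z : ℝ) (v w : ℝ × ℝ × ℝ) :
    realInnerC2 (fderiv ℝ PhiMap (x, y, z) v) (fderiv ℝ PhiMap (x, y, z) w)
      = (v.1 * w.1 + v.2.1 * w.2.1 + v.2.2 * w.2.2)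
        + Real.sin (2 * z) * (v.1 * w.1 - v.2.1 * w.2.1) := by
  have hz := (hasFDerivAt_snd (𝕜 := ℝ) (p := ((x, y, z) : ℝ × ℝ × ℝ))).snd.add_const (π / 4)
  have hΦ := ((hasFDerivAt_fst.const_mul √2).cexp_I_mul_mul_ofReal hz.sin).prodMk
    ((hasFDerivAt_snd.fst.const_mul √2).cexp_I_mul_mul_ofReal hz.cos)
  rw [(hΦ.congr_of_eventuallyEq (.of_forall fun p => by simp [PhiMap])).fderiv]
  simp only [realInnerC2, ContinuousLinearMap.prod_apply, re_conj_polarFDeriv_mul]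
  simp only [smul_apply, ContinuousLinearMap.comp_apply, ContinuousLinearMap.coe_fst',
    ContinuousLinearMap.coe_snd', smul_eq_mul]
  have h2 : √2 * √2 = 2 := mul_self_sqrt zero_le_two
  linear_combination
    (sin (z + π / 4) ^ 2 * (v.1 * w.1) + cos (z + π / 4) ^ 2 * (v.2.1 * w.2.1)) * h2
      + v.2.2 * w.2.2 * sin_sq_add_cos_sq (z + π / 4)
      + 2 * v.1 * w.1 * sin_add_pi_div_four_sq z + 2 * v.2.1 * w.2.1 * cos_add_pi_div_four_sq z
end

section
/- The map Φ(x,y,z) = (e^{i√2 x} sin(z+π/4), e^{i√2 y} cos(z+π/4)) restricted to ℝ² × (−π/4, π/4) is a surjection onto S^3 minus the two circles C₁ = {z₂=0} and C₂ = {z₁=0}, and Φ(a,b,c) = Φ(a',b',c') if and only if c = c', a − a' ∈ (√2 π)ℤ, and b − b' ∈ (√2 π)ℤ. -/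
/-!
`Φ(a, b, c)` is the pair written in polar coordinates, with arguments `√2 a`, `√2 b` and moduli
`(sin θ, cos θ)`, `θ = c + π/4`. As `θ` runs over `(0, π/2)` these moduli run bijectively over the
positive points of the unit circle, which are the moduli of the points of `S³ \ (C₁ ∪ C₂)`; the
arguments of nonzero complex numbers are determined exactly modulo `2π`.
-/

open Real

namespace Complex

theorem exp_I_mul_ofReal_eq_iff {x y : ℝ} :
    exp (I * x) = exp (I * y) ↔ ∃ k : ℤ, x - y = k * (2 * π) := by
  rw [exp_eq_exp_iff_exists_int]
  refine exists_congr fun k => ?_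
  rw [sub_eq_iff_eq_add, ← ofReal_inj]
  constructor <;> intro h
  · push_cast
    linear_combination (-I) * h + (x - y - k * (2 * π)) * I_sq
  · rw [h]; push_cast; ring

theorem exp_I_mul_mul_ofReal_eq_iff {x y r s : ℝ} (hr : 0 < r) (hs : 0 < s) :
    exp (I * x) * r = exp (I * y) * s ↔ r = s ∧ ∃ k : ℤ, x - y = k * (2 * π) := by
  rw [← exp_I_mul_ofReal_eq_iff]
  constructor
  · intro h
    have hrs : r = s := by
      simpa [norm_exp_I_mul_ofReal, abs_of_pos hr, abs_of_pos hs] using congrArg norm h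
    subst hrs
    exact ⟨rfl, mul_right_cancel₀ (ofReal_ne_zero.mpr hr.ne') h⟩
  · rintro ⟨rfl, h⟩
    rw [h]

theorem exp_I_mul_arg_mul_norm (z : ℂ) : exp (I * z.arg) * ‖z‖ = z := by
  rw [mul_comm, mul_comm I]
  exact norm_mul_exp_arg_mul_I z

end Complex

namespace Real

theorem exists_mem_Ioo_sin_eq_cos_eq {u v : ℝ} (hu : 0 < u) (hv : 0 < v) (h : u ^ 2 + v ^ 2 = 1) :
    ∃ θ ∈ Set.Ioo 0 (π / 2), sin θ = u ∧ cos θ = v := by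
  have hu1 : u < 1 := by nlinarith
  refine ⟨arcsin u, ⟨arcsin_pos.mpr hu, arcsin_lt_pi_div_two.mpr hu1⟩,
    sin_arcsin (by linarith) hu1.le, ?_⟩
  rw [cos_arcsin, show 1 - u ^ 2 = v ^ 2 by linarith, sqrt_sq hv.le]

theorem sin_pos_and_cos_pos_of_mem_Ioo {θ : ℝ} (hθ : θ ∈ Set.Ioo 0 (π / 2)) :
    0 < sin θ ∧ 0 < cos θ :=
  ⟨sin_pos_of_pos_of_lt_pi hθ.1 (by linarith [hθ.2, pi_pos]),
    cos_pos_of_mem_Ioo ⟨by linarith [hθ.1, pi_pos], hθ.2⟩⟩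

theorem injOn_sin_Ioo_zero_pi_div_two : Set.InjOn sin (Set.Ioo 0 (π / 2)) :=
  injOn_sin.mono fun _ hx => show _ ∧ _ from ⟨by linarith [hx.1, pi_pos], hx.2.le⟩

theorem injOn_cos_Ioo_zero_pi_div_two : Set.InjOn cos (Set.Ioo 0 (π / 2)) :=
  injOn_cos.mono fun _ hx => show _ ∧ _ from ⟨hx.1.le, by linarith [hx.2, pi_pos]⟩

theorem sqrt_two_mul_sub_eq_int_mul_two_pi_iff (a a' : ℝ) (k : ℤ) :
    √2 * a - √2 * a' = k * (2 * π) ↔ a - a' = k * (√2 * π) := by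
  have h2 : √2 * √2 = 2 := mul_self_sqrt zero_le_two
  rw [← mul_sub, show (k : ℝ) * (2 * π) = √2 * (k * (√2 * π)) by
    linear_combination (-(k * π)) * h2]
  exact mul_right_inj' (sqrt_pos.mpr zero_lt_two).ne'

end Real

theorem PhiMap_apply (a b c : ℝ) : PhiMap (a, b, c) =
    (Complex.exp (Complex.I * ↑(√2 * a)) * ↑(sin (c + π / 4)),
      Complex.exp (Complex.I * ↑(√2 * b)) * ↑(cos (c + π / 4))) := by
  simp [PhiMap]

theorem add_pi_div_four_mem_Ioo_iff {c : ℝ} :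
    c + π / 4 ∈ Set.Ioo 0 (π / 2) ↔ c ∈ Set.Ioo (-(π / 4)) (π / 4) := by
  constructor <;> rintro ⟨h₁, h₂⟩ <;> constructor <;> linarith

/-- `Φ` restricted to `ℝ² × (−π/4, π/4)` is a surjection onto
`S³ \ (C₁ ∪ C₂)`, where `C₁ = {z₂ = 0}`, `C₂ = {z₁ = 0}`, and
`Φ(a,b,c) = Φ(a',b',c')` iff `c = c'`, `a − a' ∈ (√2 π)ℤ`, `b − b' ∈ (√2 π)ℤ`. -/
theorem PhiMap_covering :
    (∀ a b c : ℝ, c ∈ Set.Ioo (-(π / 4)) (π / 4) →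
      ‖(PhiMap (a, b, c)).1‖ ^ 2 + ‖(PhiMap (a, b, c)).2‖ ^ 2 = 1 ∧
      (PhiMap (a, b, c)).1 ≠ 0 ∧ (PhiMap (a, b, c)).2 ≠ 0) ∧
    (∀ p : ℂ × ℂ, ‖p.1‖ ^ 2 + ‖p.2‖ ^ 2 = 1 → p.1 ≠ 0 → p.2 ≠ 0 →
      ∃ a b c : ℝ, c ∈ Set.Ioo (-(π / 4)) (π / 4) ∧ PhiMap (a, b, c) = p) ∧
    (∀ a b c a' b' c' : ℝ, c ∈ Set.Ioo (-(π / 4)) (π / 4) →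
      c' ∈ Set.Ioo (-(π / 4)) (π / 4) →
      (PhiMap (a, b, c) = PhiMap (a', b', c') ↔
        c = c' ∧ (∃ k : ℤ, a - a' = (k : ℝ) * (Real.sqrt 2 * π)) ∧
          (∃ k : ℤ, b - b' = (k : ℝ) * (Real.sqrt 2 * π)))) := by
  refine ⟨fun a b c hc => ?_, fun p hp h₁ h₂ => ?_, fun a b c a' b' c' hc hc' => ?_⟩
  · obtain ⟨hsin, hcos⟩ := sin_pos_and_cos_pos_of_mem_Ioo (add_pi_div_four_mem_Ioo_iff.mpr hc)
    simp only [PhiMap_apply, norm_mul, Complex.norm_exp_I_mul_ofReal, one_mul, Complex.norm_real,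
      norm_eq_abs, sq_abs, sin_sq_add_cos_sq, mul_ne_zero_iff, Complex.exp_ne_zero,
      Complex.ofReal_ne_zero, ne_eq, hsin.ne', hcos.ne', not_false_eq_true, and_self]
  · obtain ⟨θ, hθ, hsin, hcos⟩ :=
      exists_mem_Ioo_sin_eq_cos_eq (norm_pos_iff.mpr h₁) (norm_pos_iff.mpr h₂) hp
    have hsqrt : √2 ≠ 0 := by positivity
    refine ⟨p.1.arg / √2, p.2.arg / √2, θ - π / 4,
      add_pi_div_four_mem_Ioo_iff.mp (by rwa [sub_add_cancel]), ?_⟩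
    rw [PhiMap_apply, sub_add_cancel, hsin, hcos, mul_div_cancel₀ _ hsqrt,
      mul_div_cancel₀ _ hsqrt, Complex.exp_I_mul_arg_mul_norm, Complex.exp_I_mul_arg_mul_norm]
  · have hθ := add_pi_div_four_mem_Ioo_iff.mpr hc
    have hθ' := add_pi_div_four_mem_Ioo_iff.mpr hc'
    obtain ⟨hsin, hcos⟩ := sin_pos_and_cos_pos_of_mem_Ioo hθ
    obtain ⟨hsin', hcos'⟩ := sin_pos_and_cos_pos_of_mem_Ioo hθ'
    have hsin_iff : sin (c + π / 4) = sin (c' + π / 4) ↔ c = c' := by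
      rw [injOn_sin_Ioo_zero_pi_div_two.eq_iff hθ hθ', add_left_inj]
    have hcos_iff : cos (c + π / 4) = cos (c' + π / 4) ↔ c = c' := by
      rw [injOn_cos_Ioo_zero_pi_div_two.eq_iff hθ hθ', add_left_inj]
    simp only [PhiMap_apply, Prod.mk.injEq, Complex.exp_I_mul_mul_ofReal_eq_iff hsin hsin',
      Complex.exp_I_mul_mul_ofReal_eq_iff hcos hcos', hsin_iff, hcos_iff,
      sqrt_two_mul_sub_eq_int_mul_two_pi_iff]
    tauto
end

section
/- If G₀⁺(t,s) = tanh t − tanh s + (t−s) tanh t tanh s and f: ℝ → ℝ is measurable with |f(t)| ≤ M e^{γ|t|} for some 0 < γ < 1, then the solution u(t) = ∫₀ᵗ G₀⁺(t,s)f(s) ds satisfies |u(t)| ≤ C M e^{γ|t|} for all t, where C depends only on γ. -/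
/-!
Since `|tanh| < 1`, the kernel satisfies `|G₀⁺(t,s)| ≤ 2 + |t - s|`, and for `s` between `0` and `t`
we have `|t - s| = |t| - |s|`. Absorbing the linear growth into half of the exponential weight,
`2 + r ≤ (2 + 2/γ) e^{γr/2}`, the integrand is at most `(2 + 2/γ) M e^{γ|t|/2} e^{γ|s|/2}`, and
`|∫₀ᵗ e^{γ|s|/2} ds| ≤ (2/γ) e^{γ|t|/2}` gives the bound with `C = (2 + 2/γ)(2/γ)`.
-/

open Real MeasureTheory

/-- The variation-of-parameters kernel `G₀⁺(t,s) = tanh t − tanh s + (t−s) tanh t tanh s`. -/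
noncomputable def greenG0 (t s : ℝ) : ℝ :=
  Real.tanh t - Real.tanh s + (t - s) * Real.tanh t * Real.tanh s

open intervalIntegral Set

lemma abs_greenG0_le (t s : ℝ) : |greenG0 t s| ≤ 2 + |t - s| := by
  have ht := (abs_tanh_lt_one t).le
  have hs := (abs_tanh_lt_one s).le
  calc |greenG0 t s| ≤ |tanh t| + |tanh s| + |t - s| * (|tanh t| * |tanh s|) := by
        unfold greenG0
        rw [mul_assoc, ← abs_mul, ← abs_mul]
        exact (abs_add_le _ _).trans (add_le_add_left (abs_sub _ _) _)
    _ ≤ 1 + 1 + |t - s| * (1 * 1) := by gcongr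
    _ = 2 + |t - s| := by ring

lemma abs_sub_eq_abs_sub_abs_of_mem_uIcc {s t : ℝ} (hs : s ∈ uIcc 0 t) :
    |t - s| = |t| - |s| := by
  rcases mem_uIcc.1 hs with ⟨h0, ht⟩ | ⟨ht, h0⟩
  · rw [abs_of_nonneg (sub_nonneg.2 ht), abs_of_nonneg h0, abs_of_nonneg (h0.trans ht)]
  · rw [abs_of_nonpos (sub_nonpos.2 ht), abs_of_nonpos h0, abs_of_nonpos (ht.trans h0)]
    ring

lemma two_add_le_mul_exp {c x : ℝ} (hc : 0 < c) (hx : 0 ≤ x) :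
    2 + x ≤ (2 + 1 / c) * exp (c * x) := by
  have h1 : 1 ≤ exp (c * x) := one_le_exp (by positivity)
  have h2 : c * x ≤ exp (c * x) := by linarith [add_one_le_exp (c * x)]
  have h3 : x ≤ 1 / c * exp (c * x) := by
    rw [one_div, ← div_eq_inv_mul, le_div_iff₀ hc]; linarith
  linarith

lemma integral_exp_mul_abs_of_nonneg {c t : ℝ} (hc : c ≠ 0) (ht : 0 ≤ t) :
    ∫ s in 0..t, exp (c * |s|) = (exp (c * t) - 1) / c := by
  have habs : EqOn (fun s => exp (c * |s|)) (fun s => exp (c * s)) (uIcc 0 t) := fun s hs => by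
    rw [uIcc_of_le ht] at hs
    simp only [abs_of_nonneg hs.1]
  rw [integral_congr habs, integral_comp_mul_left (fun x => exp x) hc, integral_exp, smul_eq_mul,
    mul_zero, exp_zero, inv_mul_eq_div]

lemma abs_integral_exp_mul_abs_le {c : ℝ} (hc : 0 < c) (t : ℝ) :
    |∫ s in 0..t, exp (c * |s|)| ≤ exp (c * |t|) / c := by
  have of_nonneg : ∀ {t : ℝ}, 0 ≤ t → |∫ s in 0..t, exp (c * |s|)| ≤ exp (c * |t|) / c := by
    intro t ht
    have hpos : 0 ≤ (exp (c * t) - 1) / c :=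
      div_nonneg (sub_nonneg.2 (one_le_exp (by positivity))) hc.le
    rw [integral_exp_mul_abs_of_nonneg hc.ne' ht, abs_of_nonneg hpos, abs_of_nonneg ht]
    gcongr
    linarith
  rcases le_total 0 t with ht | ht
  · exact of_nonneg ht
  · have heven : ∫ s in 0..(-t), exp (c * |s|) = -∫ s in 0..t, exp (c * |s|) := by
      rw [← integral_symm]
      simpa only [abs_neg, neg_neg, neg_zero] using integral_comp_neg (a := 0) (b := -t)
        (fun s => exp (c * |s|))
    simpa only [heven, abs_neg] using of_nonneg (neg_nonneg.2 ht)

lemma abs_greenG0_mul_le {γ M t s : ℝ} {f : ℝ → ℝ} (hγ : 0 < γ) (hs : s ∈ uIcc 0 t)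
    (hf : |f s| ≤ M * exp (γ * |s|)) :
    |greenG0 t s * f s| ≤ (2 + 2 / γ) * M * exp (γ / 2 * |t|) * exp (γ / 2 * |s|) := by
  have hM : 0 ≤ M := nonneg_of_mul_nonneg_left ((abs_nonneg _).trans hf) (exp_pos _)
  have hts := abs_sub_eq_abs_sub_abs_of_mem_uIcc hs
  have hK : 2 + |t - s| ≤ (2 + 2 / γ) * exp (γ / 2 * (|t| - |s|)) := by
    simpa [hts, one_div_div] using two_add_le_mul_exp (half_pos hγ) (hts ▸ abs_nonneg (t - s))
  calc |greenG0 t s * f s| ≤ (2 + |t - s|) * (M * exp (γ * |s|)) := by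
        rw [abs_mul]; gcongr; exact abs_greenG0_le t s
    _ ≤ (2 + 2 / γ) * exp (γ / 2 * (|t| - |s|)) * (M * exp (γ * |s|)) := by gcongr
    _ = (2 + 2 / γ) * M * exp (γ / 2 * |t|) * exp (γ / 2 * |s|) := by
        have hexp : exp (γ / 2 * (|t| - |s|)) * exp (γ * |s|) =
            exp (γ / 2 * |t|) * exp (γ / 2 * |s|) := by
          rw [← exp_add, ← exp_add]; ring_nf
        linear_combination (2 + 2 / γ) * M * hexp

theorem greenG0_weighted_bound_general (γ : ℝ) (hγ0 : 0 < γ) :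
    ∃ C : ℝ, 0 < C ∧ ∀ (M : ℝ) (f : ℝ → ℝ), Measurable f →
      (∀ t : ℝ, |f t| ≤ M * Real.exp (γ * |t|)) →
      ∀ t : ℝ, |∫ s in (0 : ℝ)..t, greenG0 t s * f s| ≤ C * M * Real.exp (γ * |t|) := by
  refine ⟨(2 + 2 / γ) * (2 / γ), by positivity, fun M f _ hf t => ?_⟩
  have hM : 0 ≤ M := by simpa using (abs_nonneg _).trans (hf 0)
  set A := (2 + 2 / γ) * M * exp (γ / 2 * |t|) with hA
  have hbound : ∀ s ∈ uIoc 0 t, ‖greenG0 t s * f s‖ ≤ A * exp (γ / 2 * |s|) := fun s hs =>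
    abs_greenG0_mul_le hγ0 (uIoc_subset_uIcc hs) (hf s)
  calc |∫ s in 0..t, greenG0 t s * f s|
      ≤ |∫ s in 0..t, A * exp (γ / 2 * |s|)| :=
        norm_integral_le_abs_of_norm_le (ae_restrict_of_forall_mem measurableSet_uIoc hbound)
          (Continuous.intervalIntegrable (by fun_prop) _ _)
    _ = A * |∫ s in 0..t, exp (γ / 2 * |s|)| := by
        rw [intervalIntegral.integral_const_mul, abs_mul, abs_of_nonneg (by positivity)]
    _ ≤ A * (exp (γ / 2 * |t|) / (γ / 2)) := by
        gcongr; exact abs_integral_exp_mul_abs_le (half_pos hγ0) t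
    _ = (2 + 2 / γ) * (2 / γ) * M * exp (γ * |t|) := by
        have hexp : exp (γ / 2 * |t|) * exp (γ / 2 * |t|) = exp (γ * |t|) := by
          rw [← exp_add]; ring_nf
        rw [hA, ← hexp]; field_simp

/-- Weighted decay estimate: if `|f(t)| ≤ M e^{γ|t|}` with `0 < γ < 1`, then the
solution `u(t) = ∫₀ᵗ G₀⁺(t,s) f(s) ds` satisfies `|u(t)| ≤ C M e^{γ|t|}`,
where `C` depends only on `γ`. -/
theorem greenG0_weighted_bound (γ : ℝ) (hγ0 : 0 < γ) (hγ1 : γ < 1) :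
    ∃ C : ℝ, 0 < C ∧ ∀ (M : ℝ) (f : ℝ → ℝ), Measurable f →
      (∀ t : ℝ, |f t| ≤ M * Real.exp (γ * |t|)) →
      ∀ t : ℝ, |∫ s in (0 : ℝ)..t, greenG0 t s * f s| ≤ C * M * Real.exp (γ * |t|) :=
  greenG0_weighted_bound_general γ hγ0
end

section
/- Let P₁(λ)=2, P₂(λ)=λ, P_{i+1}(λ)=λP_i(λ)−P_{i−1}(λ). For every n ≥ 3: P_n has a root strictly greater than 1; letting γ_n be its largest root, P_{n−1}(x) > 0 for all x ≥ γ_n, P_{n+1}(γ_n) < 0, and the sequence (γ_n) is strictly increasing in n. -/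
/-- The even-`N` polynomial family: `P₁ = 2`, `P₂(λ) = λ`,
`P_{i+1}(λ) = λ P_i(λ) − P_{i−1}(λ)`. -/
noncomputable def Pe : ℕ → ℝ → ℝ
  | 0 => fun _ => 0
  | 1 => fun _ => 2
  | 2 => fun x => x
  | (n + 3) => fun x => x * Pe (n + 2) x - Pe (n + 1) x

lemma Pe_rec (n : ℕ) (x : ℝ) : Pe (n + 3) x = x * Pe (n + 2) x - Pe (n + 1) x := rfl

lemma Pe_cont : ∀ n, Continuous (Pe n)
  | 0 => continuous_const
  | 1 => continuous_const
  | 2 => continuous_id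
  | (n + 3) => by
      have h1 := Pe_cont (n + 2)
      have h2 := Pe_cont (n + 1)
      have : Pe (n+3) = fun x => x * Pe (n + 2) x - Pe (n + 1) x := rfl
      rw [this]
      exact (continuous_id.mul h1).sub h2

lemma Pe_ge (n : ℕ) : ∀ x : ℝ, 2 ≤ x → 2 ≤ Pe (n + 1) x ∧ Pe (n + 1) x ≤ Pe (n + 2) x := by
  induction n with
  | zero => intro x hx; simp only [Pe]; exact ⟨le_refl 2, hx⟩
  | succ n ih =>
      intro x hx
      obtain ⟨h1, h2⟩ := ih x hx
      rw [Pe_rec]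
      constructor <;> nlinarith

lemma Pe_ge_two (n : ℕ) {x : ℝ} (hx : 2 ≤ x) : 2 ≤ Pe (n + 1) x := (Pe_ge n x hx).1

/-- If `Pe (m+3)` is negative at some `γ < 2`, it has a largest root, lying in `(γ, 2)`. -/
lemma exists_top_root (m : ℕ) (γ : ℝ) (hγ2 : γ < 2) (hneg : Pe (m + 3) γ < 0) :
    ∃ γ', γ < γ' ∧ γ' < 2 ∧ Pe (m + 3) γ' = 0 ∧ ∀ x, γ' < x → 0 < Pe (m + 3) x := by
  set f := Pe (m + 3) with hf
  have hcont : Continuous f := Pe_cont (m + 3)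
  have hf2 : ∀ x : ℝ, 2 ≤ x → 2 ≤ f x := fun x hx => Pe_ge_two (m + 2) hx
  set S : Set ℝ := {x | f x = 0 ∧ γ ≤ x ∧ x ≤ 2} with hS
  -- S is nonempty by IVT
  have hsub : S ⊆ Set.Icc γ 2 := fun x hx => ⟨hx.2.1, hx.2.2⟩
  have hne : S.Nonempty := by
    have h0 : (0 : ℝ) ∈ Set.Icc (f γ) (f 2) := ⟨le_of_lt hneg, by linarith [hf2 2 le_rfl]⟩
    obtain ⟨c, hc, hfc⟩ := intermediate_value_Icc (le_of_lt hγ2) hcont.continuousOn h0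
    exact ⟨c, hfc, hc.1, hc.2⟩
  have hclosed : IsClosed S := by
    have : S = f ⁻¹' {0} ∩ Set.Icc γ 2 := by
      ext x; simp [hS, Set.mem_setOf_eq, and_assoc]
    rw [this]
    exact (isClosed_singleton.preimage hcont).inter isClosed_Icc
  have hcomp : IsCompact S := isCompact_Icc.of_isClosed_subset hclosed hsub
  have hbdd : BddAbove S := ⟨2, fun x hx => hx.2.2⟩
  set γ' := sSup S with hγ'
  have hmem : γ' ∈ S := hcomp.sSup_mem hne
  have hroot : f γ' = 0 := hmem.1
  have hγle : γ ≤ γ' := hmem.2.1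
  have hlt : γ < γ' := lt_of_le_of_ne hγle (fun he => by rw [← he] at hroot; linarith)
  have hlt2 : γ' < 2 := lt_of_le_of_ne hmem.2.2 (fun he => by rw [he] at hroot; linarith [hf2 2 le_rfl])
  refine ⟨γ', hlt, hlt2, hroot, fun x hx => ?_⟩
  by_cases h2 : 2 ≤ x
  · linarith [hf2 x h2]
  push_neg at h2
  by_contra h
  push_neg at h
  have h0 : (0 : ℝ) ∈ Set.Icc (f x) (f 2) := ⟨h, by linarith [hf2 2 le_rfl]⟩
  obtain ⟨y, hy, hfy⟩ := intermediate_value_Icc (le_of_lt h2) hcont.continuousOn h0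
  have hyS : y ∈ S := ⟨hfy, by linarith [hy.1], hy.2⟩
  have : y ≤ γ' := le_csSup hbdd hyS
  linarith [hy.1]

/-- The main inductive claim for `n = k + 3`. -/
lemma Pe_claim (k : ℕ) :
    ∃ γ : ℝ, 1 < γ ∧ γ < 2 ∧ Pe (k + 3) γ = 0 ∧ (∀ x, γ < x → 0 < Pe (k + 3) x) ∧
      (∀ x, γ ≤ x → 0 < Pe (k + 2) x) ∧ Pe (k + 4) γ < 0 := by
  induction k with
  | zero =>
      have hs2 : Real.sqrt 2 * Real.sqrt 2 = 2 := Real.mul_self_sqrt (by norm_num)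
      have hs0 : (0:ℝ) ≤ Real.sqrt 2 := Real.sqrt_nonneg 2
      have h1 : 1 < Real.sqrt 2 := by nlinarith
      have h2 : Real.sqrt 2 < 2 := by nlinarith
      have e3 : ∀ x : ℝ, Pe 3 x = x * x - 2 := fun x => by
        show x * Pe 2 x - Pe 1 x = x * x - 2; simp [Pe]
      have e4 : ∀ x : ℝ, Pe 4 x = x * (x * x - 2) - x := fun x => by
        show x * Pe 3 x - Pe 2 x = _; rw [e3]; simp [Pe]
      refine ⟨Real.sqrt 2, h1, h2, by rw [e3]; linarith, ?_, ?_, ?_⟩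
      · intro x hx; rw [e3]; nlinarith
      · intro x hx; show 0 < x; linarith
      · rw [e4]; nlinarith
  | succ k ih =>
      obtain ⟨γ, hγ1, hγ2, hroot, hposn, hposm, hneg⟩ := ih
      obtain ⟨γ', hlt, hlt2, hroot', hpos'⟩ := exists_top_root (k + 1) γ hγ2 hneg
      refine ⟨γ', by linarith, hlt2, hroot', hpos', fun x hx => hposn x (by linarith), ?_⟩
      have : Pe (k + 1 + 4) γ' = γ' * Pe (k + 4) γ' - Pe (k + 3) γ' := Pe_rec (k + 2) γ'
      rw [this, hroot']
      have := hposn γ' hlt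
      linarith

/-- For every `n ≥ 3`: `P_n` has a root `> 1`; if `γ_n` is its largest root, then
`P_{n−1}(x) > 0` for all `x ≥ γ_n`, `P_{n+1}(γ_n) < 0`, and `γ_n` is strictly
increasing in `n`. -/
theorem Pe_largest_root_properties (n : ℕ) (hn : 3 ≤ n) :
    (∃ x : ℝ, 1 < x ∧ Pe n x = 0) ∧
    ∀ γn : ℝ, (1 < γn ∧ Pe n γn = 0 ∧ ∀ x : ℝ, Pe n x = 0 → x ≤ γn) →
      ((∀ x : ℝ, γn ≤ x → 0 < Pe (n - 1) x) ∧
        Pe (n + 1) γn < 0 ∧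
        ∀ γm : ℝ, (1 < γm ∧ Pe (n + 1) γm = 0 ∧ ∀ x : ℝ, Pe (n + 1) x = 0 → x ≤ γm) →
          γn < γm) := by
  obtain ⟨k, rfl⟩ : ∃ k, n = k + 3 := ⟨n - 3, by omega⟩
  obtain ⟨γ, hγ1, hγ2, hroot, hposn, hposm, hneg⟩ := Pe_claim k
  refine ⟨⟨γ, hγ1, hroot⟩, fun γn ⟨hγn1, hγnroot, hγnmax⟩ => ?_⟩
  have heq : γn = γ := by
    have h1 : γ ≤ γn := hγnmax γ hroot
    by_contra h
    have : γ < γn := lt_of_le_of_ne h1 (fun he => h he.symm)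
    exact absurd hγnroot (ne_of_gt (hposn γn this))
  subst heq
  have hsub : k + 3 - 1 = k + 2 := by omega
  refine ⟨by rw [hsub]; exact hposm, hneg, fun γm ⟨hm1, hmroot, hmmax⟩ => ?_⟩
  -- Pe (k+4) has a root in (γn, 2], hence γm > γn
  have hcont : Continuous (Pe (k + 4)) := Pe_cont (k + 4)
  have hf2 : (2:ℝ) ≤ Pe (k + 4) 2 := Pe_ge_two (k + 3) le_rfl
  have h0 : (0 : ℝ) ∈ Set.Icc (Pe (k + 4) γn) (Pe (k + 4) 2) := ⟨le_of_lt hneg, by linarith⟩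
  obtain ⟨c, hc, hfc⟩ := intermediate_value_Icc (le_of_lt hγ2) hcont.continuousOn h0
  have hcγ : γn < c := lt_of_le_of_ne hc.1 (fun he => by rw [← he] at hfc; linarith)
  have : c ≤ γm := hmmax c hfc
  linarith
end

section
/- With P_i either recursive polynomial family (P_{i+1} = λP_i − P_{i−1}, with P₁=2,P₂=λ or P₁=1,P₂=λ−1), if γ_n > 1 is the largest root of P_n and d_i = P_{n−i+1}(γ_{n+1})/P_n(γ_{n+1}) for 2 ≤ i ≤ n with β = γ_{n+1}, then d_2 < d_3 < ⋯ < d_n. More precisely: if γ > 1 satisfies P_{n+1}(γ) = 0 and P_j(γ) > 0 for all 1 ≤ j ≤ n, then P_j(γ) − P_{j+1}(γ) > 0 for all j < n. -/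
/-- For either recursive family (`P₁ = 2, P₂ = λ` or `P₁ = 1, P₂ = λ − 1`, with
`P_{i+1} = λ P_i − P_{i−1}`): if `γ > 1` satisfies `P_{n+1}(γ) = 0` and
`P_j(γ) > 0` for `1 ≤ j ≤ n`, then `P_j(γ) − P_{j+1}(γ) > 0` for all
`1 ≤ j < n`; consequently the ratios `d_i = P_{n−i+1}(γ)/P_n(γ)` are strictly
increasing: `d₂ < d₃ < ⋯ < d_n`. -/
theorem ratios_increasing (P : ℕ → ℝ → ℝ)
    (hrec : ∀ i : ℕ, 2 ≤ i → ∀ x : ℝ, P (i + 1) x = x * P i x - P (i - 1) x)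
    (hinit : (∀ x : ℝ, P 1 x = 2 ∧ P 2 x = x) ∨ (∀ x : ℝ, P 1 x = 1 ∧ P 2 x = x - 1))
    (n : ℕ) (hn : 2 ≤ n) (γ : ℝ) (hγ : 1 < γ)
    (hroot : P (n + 1) γ = 0)
    (hpos : ∀ j : ℕ, 1 ≤ j → j ≤ n → 0 < P j γ) :
    (∀ j : ℕ, 1 ≤ j → j < n → 0 < P j γ - P (j + 1) γ) ∧
    (∀ i j : ℕ, 2 ≤ i → i < j → j ≤ n →
      P (n - i + 1) γ / P n γ < P (n - j + 1) γ / P n γ) := by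
  -- First: γ < 2. Otherwise the sequence P_j(γ) is ≥ 1 and nondecreasing,
  -- contradicting P_{n+1}(γ) = 0.
  have hγ2 : γ < 2 := by
    by_contra h
    push_neg at h
    have grow : ∀ m : ℕ, 1 ≤ P (m + 1) γ ∧ P (m + 1) γ ≤ P (m + 2) γ := by
      intro m
      induction m with
      | zero =>
        rcases hinit with hi | hi
        · obtain ⟨h1, h2⟩ := hi γ; rw [h1, h2]; constructor <;> linarith
        · obtain ⟨h1, h2⟩ := hi γ; rw [h1, h2]; constructor <;> linarith
      | succ m ih =>
        obtain ⟨ih1, ih2⟩ := ih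
        have hr := hrec (m + 2) (by omega) γ
        have e : m + 2 - 1 = m + 1 := by omega
        rw [e] at hr
        constructor
        · linarith
        · nlinarith
    have := grow n
    have e : n + 1 + 1 = n + 2 := rfl
    rw [hroot] at this
    linarith [this.1]
  -- Main claim by upward induction: P_{m+1} > P_{m+2} for m+2 ≤ n.
  have key : ∀ m : ℕ, m + 2 ≤ n → 0 < P (m + 1) γ - P (m + 2) γ := by
    intro m
    induction m with
    | zero =>
      intro _
      rcases hinit with hi | hi
      · obtain ⟨h1, h2⟩ := hi γ; rw [h1, h2]; linarith
      · obtain ⟨h1, h2⟩ := hi γ; rw [h1, h2]; linarith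
    | succ m ih =>
      intro hm
      have hprev := ih (by omega)
      have hr := hrec (m + 2) (by omega) γ
      have e : m + 2 - 1 = m + 1 := by omega
      rw [e] at hr
      have hp : 0 < P (m + 2) γ := hpos _ (by omega) (by omega)
      nlinarith [mul_pos (sub_pos.mpr hγ2) hp]
  have part1 : ∀ j : ℕ, 1 ≤ j → j < n → 0 < P j γ - P (j + 1) γ := by
    intro j hj1 hjn
    have := key (j - 1) (by omega)
    have e1 : j - 1 + 1 = j := by omega
    have e2 : j - 1 + 2 = j + 1 := by omega
    rw [e1, e2] at this
    exact this
  refine ⟨part1, ?_⟩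
  -- monotone decreasing: for 1 ≤ a < b ≤ n, P b < P a
  have mono : ∀ b a : ℕ, 1 ≤ a → a < b → b ≤ n → P b γ < P a γ := by
    intro b
    induction b with
    | zero => intro a _ h _; omega
    | succ b ih =>
      intro a ha hab hbn
      have h1 := part1 b (by omega) (by omega)
      rcases eq_or_lt_of_le (Nat.lt_succ_iff.mp hab) with h | h
      · subst h; linarith
      · have := ih a ha h (by omega); linarith
  intro i j hi hij hjn
  have hpn := hpos n (by omega) le_rfl
  have hlt : P (n - i + 1) γ < P (n - j + 1) γ :=
    mono (n - i + 1) (n - j + 1) (by omega) (by omega) (by omega)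
  exact (div_lt_div_iff_of_pos_right hpn).mpr hlt
end
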